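/- Let J = ⊕_{j=1}^n J_{m_j}(λ_j) ∈ B = ⊕_{j=1}^n M_{m_j}(ℂ), where λ_1, …, λ_n ∈ ℂ are distinct. Fix k ∈ {1, …, n} and suppose that λ_k is not an extreme point of the convex hull of {λ_1, …, λ_n}, and that m_s ≥ m_k for every index s such that λ_s is an extreme point of that convex hull. Then the compression π_k is not a boundary representation for S_J. -/

import Mathlib

open scoped ComplexOrder

noncomputable section

/-- The basic Jordan block `J_m(λ)`. -/
def jordanBlock (m : ℕ) (lam : ℂ) : Matrix (Fin m) (Fin m) ℂ :=
  Matrix.of fun i j => if (i : ℕ) = (j : ℕ) then lam else if (i : ℕ) + 1 = (j : ℕ) then 1 else 0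

/-- The direct sum `⊕_j M_{k_j}(ℂ)`. -/
abbrev PiMat (n : ℕ) (k : Fin n → ℕ) := ∀ j : Fin n, Matrix (Fin (k j)) (Fin (k j)) ℂ

/-- A `p×p` matrix with entries in the direct sum `⊕_j M_{k_j}(ℂ)` is positive if for each `j`
the associated complex block matrix is positive semidefinite. -/
def PiMatPos {n : ℕ} {k : Fin n → ℕ} {p : ℕ} (X : Matrix (Fin p) (Fin p) (PiMat n k)) : Prop :=
  ∀ j : Fin n,
    (Matrix.of fun (a b : Fin p × Fin (k j)) => X a.1 b.1 j a.2 b.2).PosSemidef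

/-- Positivity for a `p×p` matrix with entries in `M_m(ℂ)`. -/
def MatPos {m : ℕ} {p : ℕ} (X : Matrix (Fin p) (Fin p) (Matrix (Fin m) (Fin m) ℂ)) : Prop :=
  (Matrix.of fun (a b : Fin p × Fin m) => X a.1 b.1 a.2 b.2).PosSemidef

/-- Unital completely positive map defined on all of `⊕_j M_{k_j}(ℂ)`, valued in `M_m(ℂ)`. -/
def IsUcpAlg {n : ℕ} {k : Fin n → ℕ} {m : ℕ}
    (φ : PiMat n k →ₗ[ℂ] Matrix (Fin m) (Fin m) ℂ) : Prop :=
  φ 1 = 1 ∧ ∀ (p : ℕ) (X : Matrix (Fin p) (Fin p) (PiMat n k)),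
    PiMatPos X → MatPos (Matrix.of fun r s => φ (X r s))

/-- The operator system `S_T = span{1, T, T*}`. -/
def opSys {n : ℕ} {k : Fin n → ℕ} (T : PiMat n k) : Submodule ℂ (PiMat n k) :=
  Submodule.span ℂ {1, T, star T}

lemma one_mem_opSys {n : ℕ} {k : Fin n → ℕ} (T : PiMat n k) : (1 : PiMat n k) ∈ opSys T :=
  Submodule.subset_span (Set.mem_insert _ _)

lemma self_mem_opSys {n : ℕ} {k : Fin n → ℕ} (T : PiMat n k) : T ∈ opSys T :=
  Submodule.subset_span (Set.mem_insert_of_mem _ (Set.mem_insert _ _))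

lemma star_mem_opSys {n : ℕ} {k : Fin n → ℕ} (T : PiMat n k) : star T ∈ opSys T :=
  Submodule.subset_span (Set.mem_insert_of_mem _ (Set.mem_insert_of_mem _ rfl))

/-- Unital completely positive map defined on the operator system `S_T`, valued in `M_m(ℂ)`. -/
def IsUcpSub {n : ℕ} {k : Fin n → ℕ} {m : ℕ} (T : PiMat n k)
    (φ : opSys T →ₗ[ℂ] Matrix (Fin m) (Fin m) ℂ) : Prop :=
  φ ⟨1, one_mem_opSys T⟩ = 1 ∧ ∀ (p : ℕ) (X : Matrix (Fin p) (Fin p) (opSys T)),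
    PiMatPos (Matrix.of fun r s => (X r s : PiMat n k)) →
      MatPos (Matrix.of fun r s => φ (X r s))

/-- The matricial range `W_m(T)`. -/
def matricialRange {n : ℕ} {k : Fin n → ℕ} (T : PiMat n k) (m : ℕ) :
    Set (Matrix (Fin m) (Fin m) ℂ) :=
  {A | ∃ φ : opSys T →ₗ[ℂ] Matrix (Fin m) (Fin m) ℂ,
        IsUcpSub T φ ∧ φ ⟨T, self_mem_opSys T⟩ = A}

/-- The compression `π_ℓ` onto the `ℓ`-th summand is a boundary representation for `S_T`
if it is the unique ucp map `⊕_j M_{k_j}(ℂ) → M_{k_ℓ}(ℂ)` extending the restriction of `π_ℓ`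
to `S_T`. -/
def IsBoundaryRep {n : ℕ} {k : Fin n → ℕ} (T : PiMat n k) (ℓ : Fin n) : Prop :=
  ∀ φ : PiMat n k →ₗ[ℂ] Matrix (Fin (k ℓ)) (Fin (k ℓ)) ℂ,
    IsUcpAlg φ → (∀ x ∈ opSys T, φ x = x ℓ) → φ = LinearMap.proj ℓ

end

/-!
Write `λ_k = ∑ₛ tₛ λₛ` as a convex combination of extreme points of the (finite) polytope, by
Krein–Milman; then `t_k = 0` and `m_k ≤ mₛ` whenever `tₛ ≠ 0`. The leading `m_k × m_k` corner of
`J_{mₛ}(λₛ)` is `J_{m_k}(λₛ)`, so `x ↦ ∑ₛ tₛ (leading corner of xₛ)` is a ucp map sending `J` to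
`J_{m_k}(λ_k)`, hence agreeing with `π_k` on `S_J`; but it annihilates the unit of the `k`-th
summand, so it is not `π_k`.
-/

open Finset

theorem Fintype.sum_subtype_of_ne_zero {ι M : Type*} [Fintype ι] [AddCommMonoid M]
    {p : ι → Prop} [DecidablePred p] {f : ι → M} (hf : ∀ i, f i ≠ 0 → p i) :
    ∑ i : Subtype p, f i = ∑ i, f i := by
  rw [← Fintype.sum_subtype_add_sum_subtype p f,
    Fintype.sum_eq_zero (fun i : {i // ¬p i} => f i) fun i => not_imp_comm.1 (hf i) i.2,
    add_zero]

theorem exists_weights_of_mem_convexHull_of_subset_range {ι R E : Type*} [Fintype ι]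
    [Field R] [LinearOrder R] [IsStrictOrderedRing R] [AddCommGroup E] [Module R E]
    {v : ι → E} {S : Set E} (hS : S ⊆ Set.range v) {x : E} (hx : x ∈ convexHull R S) :
    ∃ t : ι → R, (∀ i, 0 ≤ t i) ∧ ∑ i, t i = 1 ∧ ∑ i, t i • v i = x ∧
      ∀ i, t i ≠ 0 → v i ∈ S := by
  classical
  obtain ⟨κ, _, w, z, hw0, hw1, hzS, hwz⟩ := mem_convexHull_iff_exists_fintype.1 hx
  choose g hg using fun j => hS (hzS j)
  refine ⟨fun i => ∑ j with g j = i, w j, fun i => sum_nonneg fun j _ => hw0 j,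
    (sum_fiberwise univ g w).trans hw1, ?_, fun i hi => ?_⟩
  · simp_rw [sum_smul]
    rw [← hwz, ← sum_fiberwise univ g (fun j => w j • z j)]
    refine sum_congr rfl fun i _ => sum_congr rfl fun j hj => ?_
    obtain rfl := (mem_filter.1 hj).2
    rw [hg]
  · obtain ⟨j, hj, hji⟩ := exists_ne_zero_of_sum_ne_zero hi
    rw [← (mem_filter.1 hj).2, hg j]
    exact hzS j

theorem Set.Finite.convexHull_extremePoints_convexHull {E : Type*} [AddCommGroup E] [Module ℝ E]
    [TopologicalSpace E] [T2Space E] [IsTopologicalAddGroup E] [ContinuousSMul ℝ E]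
    [LocallyConvexSpace ℝ E] {s : Set E} (hs : s.Finite) :
    convexHull ℝ ((convexHull ℝ s).extremePoints ℝ) = convexHull ℝ s := by
  have hfin : ((convexHull ℝ s).extremePoints ℝ).Finite :=
    hs.subset extremePoints_convexHull_subset
  rw [← (hfin.isClosed_convexHull ℝ).closure_eq]
  exact closure_convexHull_extremePoints (hs.isCompact_convexHull ℝ) (convex_convexHull ℝ s)

theorem exists_weights_extremePoints_of_mem_convexHull {ι E : Type*} [Fintype ι]
    [AddCommGroup E] [Module ℝ E] [TopologicalSpace E] [T2Space E] [IsTopologicalAddGroup E]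
    [ContinuousSMul ℝ E] [LocallyConvexSpace ℝ E] {v : ι → E} {x : E}
    (hx : x ∈ convexHull ℝ (Set.range v)) :
    ∃ t : ι → ℝ, (∀ i, 0 ≤ t i) ∧ ∑ i, t i = 1 ∧ ∑ i, t i • v i = x ∧
      ∀ i, t i ≠ 0 → v i ∈ (convexHull ℝ (Set.range v)).extremePoints ℝ := by
  rw [← (Set.finite_range v).convexHull_extremePoints_convexHull] at hx
  exact exists_weights_of_mem_convexHull_of_subset_range extremePoints_convexHull_subset hx

theorem jordanBlock_eq_smul_one_add (m : ℕ) (lam : ℂ) :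
    jordanBlock m lam = lam • (1 : Matrix (Fin m) (Fin m) ℂ) + jordanBlock m 0 := by
  ext i j
  by_cases h : (i : ℕ) = j
  · simp [jordanBlock, Fin.ext h]
  · simp [jordanBlock, h, Matrix.one_apply_ne (fun hij => h (congrArg Fin.val hij))]

theorem jordanBlock_submatrix_castLE {a b : ℕ} (h : a ≤ b) (lam : ℂ) :
    (jordanBlock b lam).submatrix (Fin.castLE h) (Fin.castLE h) = jordanBlock a lam := by
  ext i j
  simp [jordanBlock]

theorem sum_smul_jordanBlock {ι : Type*} [Fintype ι] {t : ι → ℝ} (ht : ∑ i, t i = 1) (a : ℕ)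
    (lam : ι → ℂ) : ∑ i, t i • jordanBlock a (lam i) = jordanBlock a (∑ i, t i • lam i) := by
  have hsplit : ∀ i, t i • jordanBlock a (lam i) = (t i • lam i) • 1 + t i • jordanBlock a 0 :=
    fun i => by rw [jordanBlock_eq_smul_one_add, smul_add, smul_assoc]
  rw [sum_congr rfl fun i _ => hsplit i, sum_add_distrib, ← sum_smul, ← sum_smul, ht, one_smul,
    ← jordanBlock_eq_smul_one_add]

/-- `x ↦ ∑ₛ tₛ Vₛ* xₛ Vₛ`, where `Vₛ : ℂᵃ → ℂ^{mₛ}` includes the first `a` coordinates.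
Summands with `mₛ < a` are skipped; this is harmless for weights vanishing on them. -/
noncomputable def cornerAverage {n : ℕ} (m : Fin n → ℕ) (a : ℕ) (t : Fin n → ℝ) :
    PiMat n m →ₗ[ℂ] Matrix (Fin a) (Fin a) ℂ where
  toFun x := ∑ s : {s // a ≤ m s}, t s • (x s).submatrix (Fin.castLE s.2) (Fin.castLE s.2)
  map_add' x y := by simp only [Pi.add_apply, Matrix.submatrix_add, smul_add, sum_add_distrib]
  map_smul' c x := by
    simp only [Pi.smul_apply, Matrix.submatrix_smul, smul_sum, RingHom.id_apply, smul_comm c]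

section cornerAverage

variable {n : ℕ} {m : Fin n → ℕ} {a : ℕ} {t : Fin n → ℝ}

theorem cornerAverage_apply (x : PiMat n m) :
    cornerAverage m a t x =
      ∑ s : {s // a ≤ m s}, t s • (x s).submatrix (Fin.castLE s.2) (Fin.castLE s.2) := rfl

theorem cornerAverage_one (hsupp : ∀ s, t s ≠ 0 → a ≤ m s) (ht : ∑ s, t s = 1) :
    cornerAverage m a t 1 = 1 := by
  simp_rw [cornerAverage_apply, Pi.one_apply, Matrix.submatrix_one _ (Fin.castLE_injective _),
    ← sum_smul, Fintype.sum_subtype_of_ne_zero hsupp, ht, one_smul]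

theorem cornerAverage_jordanBlock (hsupp : ∀ s, t s ≠ 0 → a ≤ m s) (ht : ∑ s, t s = 1)
    (lam : Fin n → ℂ) :
    cornerAverage m a t (fun j => jordanBlock (m j) (lam j)) =
      jordanBlock a (∑ s, t s • lam s) := by
  rw [cornerAverage_apply,
    ← Fintype.sum_subtype_of_ne_zero fun s hs => hsupp s (left_ne_zero_of_smul hs)]
  simp only [jordanBlock_submatrix_castLE]
  exact sum_smul_jordanBlock ((Fintype.sum_subtype_of_ne_zero hsupp).trans ht) a _

theorem cornerAverage_star (x : PiMat n m) :
    cornerAverage m a t (star x) = star (cornerAverage m a t x) := by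
  simp only [cornerAverage_apply, star_sum, star_smul, Pi.star_apply, Matrix.star_eq_conjTranspose,
    Matrix.conjTranspose_submatrix, star_trivial]

theorem isUcpAlg_cornerAverage (ht0 : ∀ s, 0 ≤ t s) (hsupp : ∀ s, t s ≠ 0 → a ≤ m s)
    (ht : ∑ s, t s = 1) : IsUcpAlg (cornerAverage m a t) := by
  refine ⟨cornerAverage_one hsupp ht, fun p X hX => ?_⟩
  change (Matrix.of fun (u v : Fin p × Fin a) => cornerAverage m a t (X u.1 v.1) u.2 v.2).PosSemidef
  have hblock : (Matrix.of fun (u v : Fin p × Fin a) => cornerAverage m a t (X u.1 v.1) u.2 v.2) =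
      ∑ s : {s // a ≤ m s}, t s •
        (Matrix.of fun (u v : Fin p × Fin (m s)) => X u.1 v.1 s u.2 v.2).submatrix
          (Prod.map id (Fin.castLE s.2)) (Prod.map id (Fin.castLE s.2)) := by
    ext u v
    simp [cornerAverage_apply, Matrix.sum_apply]
  rw [hblock]
  exact Matrix.posSemidef_sum _ fun s _ => ((hX s).submatrix _).smul (ht0 s)

theorem cornerAverage_single_of_eq_zero {k : Fin n} (hk : t k = 0)
    (A : Matrix (Fin (m k)) (Fin (m k)) ℂ) : cornerAverage m a t (Pi.single k A) = 0 := by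
  rw [cornerAverage_apply]
  refine sum_eq_zero fun ⟨s, _⟩ _ => ?_
  dsimp only
  obtain rfl | hs := eq_or_ne s k
  · rw [hk, zero_smul]
  · simp [Pi.single_eq_of_ne hs]

end cornerAverage

theorem eqOn_opSys {n : ℕ} {k : Fin n → ℕ} {M : Type*} [AddCommMonoid M] [Module ℂ M] [Star M]
    {T : PiMat n k} {φ ψ : PiMat n k →ₗ[ℂ] M} (hφ : ∀ x, φ (star x) = star (φ x))
    (hψ : ∀ x, ψ (star x) = star (ψ x)) (h1 : φ 1 = ψ 1) (hT : φ T = ψ T) :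
    Set.EqOn ⇑φ ⇑ψ (opSys T : Set (PiMat n k)) := by
  refine LinearMap.eqOn_span' ?_
  rintro x (rfl | rfl | hx)
  exacts [h1, hT, by rw [Set.mem_singleton_iff.1 hx, hφ, hψ, hT]]

theorem not_boundaryRep_of_not_extremePoint_general (n : ℕ) (m : Fin n → ℕ) (hm : ∀ j, 0 < m j)
    (lam : Fin n → ℂ) (k : Fin n)
    (hk : lam k ∉ Set.extremePoints ℝ (convexHull ℝ (Set.range lam)))
    (hsize : ∀ s : Fin n,
      lam s ∈ Set.extremePoints ℝ (convexHull ℝ (Set.range lam)) → m k ≤ m s) :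
    ¬ IsBoundaryRep (fun j => jordanBlock (m j) (lam j)) k := by
  obtain ⟨t, ht0, ht1, htlam, hext⟩ :=
    exists_weights_extremePoints_of_mem_convexHull (subset_convexHull ℝ (Set.range lam) ⟨k, rfl⟩)
  have hsupp : ∀ s, t s ≠ 0 → m k ≤ m s := fun s hs => hsize s (hext s hs)
  have htk : t k = 0 := not_imp_comm.1 (hext k) hk
  intro hbd
  have hφ : cornerAverage m (m k) t = LinearMap.proj k :=
    hbd _ (isUcpAlg_cornerAverage ht0 hsupp ht1) fun x hx =>
      eqOn_opSys (ψ := LinearMap.proj k) cornerAverage_star (fun _ => rfl)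
        (cornerAverage_one hsupp ht1) (by rw [cornerAverage_jordanBlock hsupp ht1, htlam]; rfl) hx
  have : NeZero (m k) := ⟨(hm k).ne'⟩
  have h01 : (0 : Matrix (Fin (m k)) (Fin (m k)) ℂ) = 1 := by
    simpa [cornerAverage_single_of_eq_zero htk] using LinearMap.congr_fun hφ (Pi.single k 1)
  exact zero_ne_one h01

/-- if `λ_k` is not an extreme point of the convex hull of the (distinct)
eigenvalues `λ_1, …, λ_n`, and every block whose eigenvalue is an extreme point of that
convex hull has size at least `m_k`, then the compression `π_k` is not a boundary
representation for `S_J`, where `J = ⊕_j J_{m_j}(λ_j)`. -/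
theorem not_boundaryRep_of_not_extremePoint (n : ℕ) (m : Fin n → ℕ) (hm : ∀ j, 0 < m j)
    (lam : Fin n → ℂ) (hdist : Function.Injective lam) (k : Fin n)
    (hk : lam k ∉ Set.extremePoints ℝ (convexHull ℝ (Set.range lam)))
    (hsize : ∀ s : Fin n,
      lam s ∈ Set.extremePoints ℝ (convexHull ℝ (Set.range lam)) → m k ≤ m s) :
    ¬ IsBoundaryRep (fun j => jordanBlock (m j) (lam j)) k :=
  not_boundaryRep_of_not_extremePoint_general n m hm lam k hk hsize
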